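/- For all n ≥ 3, the number of paths between pairs of distinct leaves, summed over all plane trees on n vertices, equals (2n-5)!/((n-3)!)^2. -/

import Mathlib

inductive PlaneTree : Type where
  | node : List PlaneTree → PlaneTree

namespace PlaneTree

mutual
def size : PlaneTree → ℕ
  | .node ts => 1 + sizeList ts
def sizeList : List PlaneTree → ℕ
  | [] => 0
  | t :: ts => size t + sizeList ts
end

mutual
def positions : PlaneTree → List (List ℕ)
  | .node ts => [] :: positionsList 0 ts
def positionsList : ℕ → List PlaneTree → List (List ℕ)
  | _, [] => []
  | i, t :: ts => (positions t).map (i :: ·) ++ positionsList (i+1) ts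
end

mutual
def leafPositions : PlaneTree → List (List ℕ)
  | .node [] => [[]]
  | .node (t :: ts) => leafList 0 (t :: ts)
def leafList : ℕ → List PlaneTree → List (List ℕ)
  | _, [] => []
  | i, t :: ts => (leafPositions t).map (i :: ·) ++ leafList (i+1) ts
end

def isPrefixB : List ℕ → List ℕ → Bool
  | [], _ => true
  | _ :: _, [] => false
  | a :: as, b :: bs => a == b && isPrefixB as bs

def lcpLen : List ℕ → List ℕ → ℕ
  | a :: as, b :: bs => if a = b then 1 + lcpLen as bs else 0
  | _, _ => 0

/-- number of edges on the path between two vertices given by positions -/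
def pathDist (p q : List ℕ) : ℕ :=
  (p.length - lcpLen p q) + (q.length - lcpLen p q)

/-- number of vertical paths (vertex, proper descendant) in a tree -/
def verticalPairs (T : PlaneTree) : ℕ :=
  ((positions T).map (fun q =>
    ((positions T).filter (fun p => p != q && isPrefixB p q)).length)).sum

/-- total number of edges over all vertical paths in a tree -/
def verticalEdges (T : PlaneTree) : ℕ :=
  ((positions T).map (fun q =>
    (((positions T).filter (fun p => p != q && isPrefixB p q)).map
      (fun p => q.length - p.length)).sum)).sum

/-- number of (unordered) paths between distinct vertices -/
def pathCount (T : PlaneTree) : ℕ := ((positions T).sublistsLen 2).length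

/-- Wiener index: sum of distances over unordered pairs of distinct vertices -/
def wiener (T : PlaneTree) : ℕ :=
  (((positions T).sublistsLen 2).map (fun l =>
    match l with
    | [p, q] => pathDist p q
    | _ => 0)).sum

end PlaneTree

/-!
A plane tree on `m + 2` vertices is a root over a forest on `m + 1` vertices, and a nonempty
forest is `node us :: vs`: the children `us` of its first root followed by the remaining forest
`vs`. Its leaves are those of `vs` together with those of `node us`, which are the leaves of `us`
or, when `us = []`, the root itself. Grading forests by size, the generating functions `A`
(number of forests), `B` (total number of leaves) and `P` (total number of pairs of leaves)
therefore satisfy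
  `A = 1 + X A²`,  `B = X ((B + 1) A + A B)`,  `P = X (P A + (B + 1) B + A P)`.
Let `D = ∑ₘ binom(2m, m) Xᵐ`; the recurrence for central binomial coefficients reads
`(1 - 4X) D' = 2D`, so `(1 - 4X) D² = 1` and `D' = 2D³`. Since `(1 - 2XA)² = 1 - 4X`, we get
`D (1 - 2XA) = 1`, then `2B = D - 1` and `4P = X (D³ - D)`, and reading `D³` off `D' = 2D³`
gives `m binom(2m, m) / 2` pairs of leaves in total over forests on `m + 1` vertices.
-/

open Finset PowerSeries

theorem Nat.add_choose_two (a b : ℕ) : (a + b).choose 2 = a.choose 2 + a * b + b.choose 2 := by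
  simp [Nat.add_choose_eq, Nat.antidiagonal_succ]
  ring

theorem PowerSeries.coeff_ofNat_mul {R : Type*} [Semiring R] (a : ℕ) [a.AtLeastTwo] (n : ℕ)
    (f : R⟦X⟧) : coeff n ((ofNat(a) : R⟦X⟧) * f) = ofNat(a) * coeff n f := by
  rw [← map_ofNat C, coeff_C_mul]

namespace PlaneTree

theorem node_injective : Function.Injective node := fun _ _ h => by cases h; rfl

theorem sizeList_cons_node (us vs : List PlaneTree) :
    sizeList (node us :: vs) = sizeList us + sizeList vs + 1 := by
  simp only [sizeList, size]; omega

open Classical in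
noncomputable def forests : ℕ → Finset (List PlaneTree)
  | 0 => {[]}
  | m + 1 => (antidiagonal m).attach.biUnion fun p =>
      (forests p.1.1 ×ˢ forests p.1.2).image fun x => node x.1 :: x.2
decreasing_by all_goals (have := HasAntidiagonal.mem_antidiagonal.mp p.2; omega)

theorem mem_forests {m : ℕ} {ts : List PlaneTree} : ts ∈ forests m ↔ sizeList ts = m := by
  induction m using Nat.strong_induction_on generalizing ts with
  | _ m ih =>
  rcases m with _ | m <;> rcases ts with _ | ⟨⟨us⟩, vs⟩
  · simp [forests, sizeList]
  · simp [forests, sizeList_cons_node]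
  · simp [forests, sizeList]
  · simp only [forests, mem_biUnion, mem_attach, mem_image, mem_product, true_and,
      List.cons.injEq, node.injEq, sizeList_cons_node, Subtype.exists,
      HasAntidiagonal.mem_antidiagonal, Prod.exists, Nat.add_right_cancel_iff]
    constructor
    · rintro ⟨i, j, hij, us', vs', ⟨hus, hvs⟩, rfl, rfl⟩
      rw [ih i (by omega)] at hus
      rw [ih j (by omega)] at hvs
      omega
    · intro h
      refine ⟨sizeList us, sizeList vs, h, us, vs, ⟨?_, ?_⟩, rfl, rfl⟩
      · exact (ih _ (by omega)).2 rfl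
      · exact (ih _ (by omega)).2 rfl

theorem sum_forests_succ {M : Type*} [AddCommMonoid M] (h : List PlaneTree → M) (m : ℕ) :
    ∑ ts ∈ forests (m + 1), h ts =
      ∑ p ∈ antidiagonal m, ∑ us ∈ forests p.1, ∑ vs ∈ forests p.2, h (node us :: vs) := by
  classical
  rw [forests, sum_biUnion, ← sum_attach (antidiagonal m)]
  · refine sum_congr rfl fun p _ => ?_
    rw [sum_image, sum_product]
    rintro ⟨us, vs⟩ - ⟨us', vs'⟩ - h
    simp_all
  · rintro ⟨p, hp⟩ - ⟨q, hq⟩ - hpq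
    simp only [Function.onFun, disjoint_left, mem_image, mem_product, not_exists, not_and]
    rintro _ ⟨⟨us, vs⟩, ⟨hus, hvs⟩, rfl⟩ ⟨us', vs'⟩ ⟨hus', hvs'⟩ h
    simp only [List.cons.injEq, node.injEq] at h
    obtain ⟨rfl, rfl⟩ := h
    rw [mem_forests] at hus hvs hus' hvs'
    exact hpq (Subtype.ext (Prod.ext (hus.symm.trans hus') (hvs.symm.trans hvs')))

theorem finsum_size_succ {M : Type*} [AddCommMonoid M] (f : PlaneTree → M) (m : ℕ) :
    ∑ᶠ T : {T : PlaneTree // T.size = m + 1}, f T = ∑ us ∈ forests m, f (node us) := by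
  have hset : {T : PlaneTree | T.size = m + 1} = ↑((forests m).map ⟨node, node_injective⟩) := by
    ext ⟨us⟩
    simp [mem_forests, size]
    omega
  calc ∑ᶠ T : {T : PlaneTree // T.size = m + 1}, f T
      = ∑ T ∈ (forests m).map ⟨node, node_injective⟩, f T := by
        rw [← finsum_mem_coe_finset, ← hset]
        exact finsum_set_coe_eq_finsum_mem _
    _ = ∑ us ∈ forests m, f (node us) := sum_map _ _ _

def leafCount (ts : List PlaneTree) : ℕ := (ts.map fun t => t.leafPositions.length).sum

@[simp] theorem leafCount_nil : leafCount [] = 0 := rfl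

theorem leafCount_cons (t : PlaneTree) (ts : List PlaneTree) :
    leafCount (t :: ts) = t.leafPositions.length + leafCount ts := by
  simp [leafCount]

theorem length_leafList (i : ℕ) (ts : List PlaneTree) : (leafList i ts).length = leafCount ts := by
  induction ts generalizing i with
  | nil => rfl
  | cons t ts ih => simp [leafList, leafCount_cons, ih]

theorem length_leafPositions_node (us : List PlaneTree) :
    (node us).leafPositions.length = leafCount us + if us = [] then 1 else 0 := by
  rcases us with _ | ⟨t, ts⟩
  · rfl
  · simp [leafPositions, length_leafList]

theorem choose_two_length_leafPositions_node (us : List PlaneTree) :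
    (node us).leafPositions.length.choose 2 = (leafCount us).choose 2 := by
  rcases us with _ | ⟨t, ts⟩
  · rfl
  · simp [length_leafPositions_node]

section GeneratingFunction

variable {R : Type*} [CommSemiring R]

noncomputable def forestGF (f : List PlaneTree → R) : R⟦X⟧ :=
  mk fun m => ∑ ts ∈ forests m, f ts

theorem coeff_forestGF (f : List PlaneTree → R) (m : ℕ) :
    coeff m (forestGF f) = ∑ ts ∈ forests m, f ts :=
  coeff_mk _ _

theorem coeff_mul_forestGF (f g : List PlaneTree → R) (m : ℕ) :
    coeff m (forestGF f * forestGF g) =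
      ∑ p ∈ antidiagonal m, ∑ us ∈ forests p.1, ∑ vs ∈ forests p.2, f us * g vs := by
  simp only [coeff_mul, coeff_forestGF, sum_mul_sum]

theorem forestGF_eq_of_node_cons {ι : Type*} (s : Finset ι) (h : List PlaneTree → R)
    (f g : ι → List PlaneTree → R)
    (hcons : ∀ us vs, h (node us :: vs) = ∑ k ∈ s, f k us * g k vs) :
    forestGF h = C (h []) + X * ∑ k ∈ s, forestGF (f k) * forestGF (g k) := by
  ext (_ | m)
  · simp [coeff_forestGF, forests]
  · simp only [map_add, coeff_C, coeff_succ_X_mul, map_sum, coeff_mul_forestGF, coeff_forestGF,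
      sum_forests_succ, hcons, Nat.succ_ne_zero, if_false, zero_add]
    conv_rhs => rw [sum_comm]
    refine sum_congr rfl fun p _ => ?_
    conv_rhs => rw [sum_comm]
    refine sum_congr rfl fun us _ => ?_
    exact sum_comm

theorem forestGF_leafCount_node :
    forestGF (fun us => ((node us).leafPositions.length : R)) =
      forestGF (fun us => (leafCount us : R)) + 1 := by
  ext (_ | m)
  · simp only [map_add, coeff_forestGF, coeff_one]
    simp [forests, length_leafPositions_node]
  · have hne : ∀ us ∈ forests (m + 1), us ≠ [] := by
      rintro _ h rfl
      simp [mem_forests, sizeList] at h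
    simp +contextual [coeff_forestGF, length_leafPositions_node, hne]

theorem forestGF_one :
    forestGF (1 : List PlaneTree → R) = 1 + X * (forestGF 1 * forestGF 1) := by
  simpa using forestGF_eq_of_node_cons (univ : Finset Unit) (1 : List PlaneTree → R)
    (fun _ => 1) (fun _ => 1) (fun _ _ => by simp)

theorem forestGF_leafCount :
    forestGF (fun ts => (leafCount ts : R)) =
      X * ((forestGF (fun ts => (leafCount ts : R)) + 1) * forestGF 1 +
        forestGF 1 * forestGF (fun ts => (leafCount ts : R))) := by
  have := forestGF_eq_of_node_cons univ (fun ts => (leafCount ts : R))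
    ![fun us => ((node us).leafPositions.length : R), 1] ![1, fun vs => (leafCount vs : R)]
    (fun us vs => by simp [leafCount_cons])
  simpa [Fin.sum_univ_two, forestGF_leafCount_node] using this

theorem forestGF_leafCount_choose_two :
    forestGF (fun ts => ((leafCount ts).choose 2 : R)) =
      X * (forestGF (fun ts => ((leafCount ts).choose 2 : R)) * forestGF 1 +
        (forestGF (fun ts => (leafCount ts : R)) + 1) * forestGF (fun ts => (leafCount ts : R)) +
        forestGF 1 * forestGF (fun ts => ((leafCount ts).choose 2 : R))) := by
  have := forestGF_eq_of_node_cons univ (fun ts => ((leafCount ts).choose 2 : R))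
    ![fun us => ((leafCount us).choose 2 : R), fun us => ((node us).leafPositions.length : R), 1]
    ![1, fun vs => (leafCount vs : R), fun vs => ((leafCount vs).choose 2 : R)]
    (fun us vs => by
      simp [leafCount_cons, Nat.add_choose_two, Fin.sum_univ_three,
        choose_two_length_leafPositions_node])
  simpa [Fin.sum_univ_three, forestGF_leafCount_node] using this

end GeneratingFunction

end PlaneTree

noncomputable def centralBinomGF : ℚ⟦X⟧ := mk fun n => (n.centralBinom : ℚ)

theorem coeff_centralBinomGF (n : ℕ) : coeff n centralBinomGF = n.centralBinom := coeff_mk _ _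

theorem constantCoeff_centralBinomGF : constantCoeff centralBinomGF = 1 := by
  simpa using coeff_centralBinomGF 0

theorem derivative_one_sub_four_X : d⁄dX ℚ (1 - 4 * X) = -4 := by
  rw [← map_ofNat C 4]
  simp

theorem one_sub_four_X_mul_derivative_centralBinomGF :
    (1 - 4 * X) * d⁄dX ℚ centralBinomGF = 2 * centralBinomGF := by
  ext (_ | n)
  · simp only [sub_mul, one_mul, map_sub, mul_assoc, coeff_ofNat_mul, coeff_zero_X_mul,
      coeff_derivative, coeff_centralBinomGF]
    norm_num [Nat.centralBinom, Nat.choose]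
  · have := congrArg (Nat.cast : ℕ → ℚ) (Nat.succ_mul_centralBinom_succ (n + 1))
    push_cast at this
    simp only [sub_mul, one_mul, map_sub, mul_assoc, coeff_ofNat_mul, coeff_succ_X_mul,
      coeff_derivative, coeff_centralBinomGF]
    push_cast
    linarith

theorem one_sub_four_X_mul_centralBinomGF_sq : (1 - 4 * X) * centralBinomGF ^ 2 = 1 := by
  apply derivative.ext
  · rw [Derivation.leibniz, derivative_pow, derivative_one_sub_four_X, derivative_one,
      smul_eq_mul, smul_eq_mul]
    linear_combination (2 * centralBinomGF) * one_sub_four_X_mul_derivative_centralBinomGF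
  · simp [constantCoeff_centralBinomGF]

theorem derivative_centralBinomGF : d⁄dX ℚ centralBinomGF = 2 * centralBinomGF ^ 3 := by
  linear_combination centralBinomGF ^ 2 * one_sub_four_X_mul_derivative_centralBinomGF -
    d⁄dX ℚ centralBinomGF * one_sub_four_X_mul_centralBinomGF_sq

theorem coeff_centralBinomGF_pow_three (n : ℕ) :
    coeff n (centralBinomGF ^ 3) = (2 * n + 1 : ℚ) * n.centralBinom := by
  have hD := congrArg (coeff n) derivative_centralBinomGF
  have hrec := congrArg (Nat.cast : ℕ → ℚ) (Nat.succ_mul_centralBinom_succ n)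
  rw [coeff_derivative, coeff_ofNat_mul, coeff_centralBinomGF] at hD
  push_cast at hrec
  linarith

theorem centralBinomGF_mul_one_sub_two_X_mul {A : ℚ⟦X⟧} (hA : A = 1 + X * (A * A)) :
    centralBinomGF * (1 - 2 * X * A) = 1 := by
  have hsq : (centralBinomGF * (1 - 2 * X * A)) * (centralBinomGF * (1 - 2 * X * A)) = 1 := by
    linear_combination (-4 * X * centralBinomGF ^ 2) * hA + one_sub_four_X_mul_centralBinomGF_sq
  refine (mul_self_eq_one_iff.mp hsq).resolve_right fun h => ?_
  have := congrArg constantCoeff h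
  norm_num [constantCoeff_centralBinomGF] at this

namespace PlaneTree

theorem two_mul_forestGF_leafCount :
    2 * forestGF (fun ts => (leafCount ts : ℚ)) = centralBinomGF - 1 := by
  linear_combination (2 * centralBinomGF) * forestGF_leafCount (R := ℚ) -
    (2 * forestGF (fun ts => (leafCount ts : ℚ)) + 1) *
      centralBinomGF_mul_one_sub_two_X_mul (forestGF_one (R := ℚ))

theorem four_mul_forestGF_leafCount_choose_two :
    4 * forestGF (fun ts => ((leafCount ts).choose 2 : ℚ)) =
      X * (centralBinomGF ^ 3 - centralBinomGF) := by
  linear_combination (4 * centralBinomGF) * forestGF_leafCount_choose_two (R := ℚ) -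
    (4 * forestGF (fun ts => ((leafCount ts).choose 2 : ℚ))) *
      centralBinomGF_mul_one_sub_two_X_mul (forestGF_one (R := ℚ)) +
    X * centralBinomGF * (2 * forestGF (fun ts => (leafCount ts : ℚ)) + centralBinomGF + 1) *
      two_mul_forestGF_leafCount

theorem sum_forests_leafCount_choose_two (m : ℕ) :
    ∑ ts ∈ forests (m + 1), ((leafCount ts).choose 2 : ℚ) = m * m.centralBinom / 2 := by
  have h := congrArg (coeff (m + 1)) four_mul_forestGF_leafCount_choose_two
  rw [coeff_ofNat_mul, coeff_forestGF, coeff_succ_X_mul, map_sub, coeff_centralBinomGF_pow_three,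
    coeff_centralBinomGF] at h
  linarith

end PlaneTree

theorem Nat.succ_mul_centralBinom_succ_div_two (p : ℕ) :
    ((p + 1) * (p + 1).centralBinom / 2 : ℚ) = (2 * p + 1).factorial / (p.factorial : ℚ) ^ 2 := by
  have hrec := congrArg (Nat.cast : ℕ → ℚ) (Nat.succ_mul_centralBinom_succ p)
  have hfac := Nat.choose_mul_factorial_mul_factorial (show p ≤ 2 * p by omega)
  rw [show 2 * p - p = p by omega, ← Nat.centralBinom_eq_two_mul_choose] at hfac
  have hfac' := congrArg (Nat.cast : ℕ → ℚ) hfac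
  push_cast at hrec hfac'
  rw [Nat.factorial_succ, Nat.cast_mul, ← hfac']
  field_simp
  push_cast
  linear_combination hrec

theorem total_leaf_to_leaf_paths_plane_trees (n : ℕ) (hn : 3 ≤ n) :
    (∑ᶠ T : {T : PlaneTree // T.size = n}, (((T.1.leafPositions).sublistsLen 2).length : ℚ))
      = (Nat.factorial (2 * n - 5) : ℚ) / ((Nat.factorial (n - 3) : ℚ)) ^ 2 := by
  obtain ⟨p, rfl⟩ : ∃ p, n = p + 1 + 1 + 1 := ⟨n - 3, by omega⟩
  simp only [List.length_sublistsLen]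
  rw [PlaneTree.finsum_size_succ (fun T => ((T.leafPositions.length.choose 2 : ℕ) : ℚ))]
  simp only [PlaneTree.choose_two_length_leafPositions_node]
  rw [PlaneTree.sum_forests_leafCount_choose_two, show 2 * (p + 1 + 1 + 1) - 5 = 2 * p + 1 by omega,
    show p + 1 + 1 + 1 - 3 = p by omega]
  push_cast
  exact Nat.succ_mul_centralBinom_succ_div_two p
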